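/- In System F, with Bool = ∀X(X→(X→X)), the closed normal terms typable of type Bool are exactly λxλy.x and λxλy.y (uniqueness of Boolean representation). -/

import Mathlib

/-! Untyped λ-calculus (de Bruijn) and System F realizability semantics. -/

/-- Untyped λ-terms in de Bruijn notation. -/
inductive Lam : Type
  | var : ℕ → Lam
  | app : Lam → Lam → Lam
  | lam : Lam → Lam
deriving DecidableEq

namespace Lam

/-- Shift the free variables ≥ `d` up by one. -/
def lift (d : ℕ) : Lam → Lam
  | var n => if n < d then var n else var (n + 1)
  | app t u => app (lift d t) (lift d u)
  | lam t => lam (lift (d + 1) t)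

/-- Capture-avoiding substitution of `u` for the variable `k` (de Bruijn). -/
def subst : Lam → ℕ → Lam → Lam
  | var n, k, u => if n = k then u else if k < n then var (n - 1) else var n
  | app t s, k, u => app (subst t k u) (subst s k u)
  | lam t, k, u => lam (subst t (k + 1) (lift 0 u))

/-- Free variables of a term. -/
def fv : Lam → Finset ℕ
  | var n => {n}
  | app t u => fv t ∪ fv u
  | lam t => ((fv t).erase 0).image (· - 1)

/-- One-step β-reduction. -/
inductive Beta : Lam → Lam → Prop
  | beta (t u : Lam) : Beta (app (lam t) u) (subst t 0 u)
  | appL {t t' : Lam} (u : Lam) : Beta t t' → Beta (app t u) (app t' u)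
  | appR (t : Lam) {u u' : Lam} : Beta u u' → Beta (app t u) (app t u')
  | lam {t t' : Lam} : Beta t t' → Beta (lam t) (lam t')

/-- Many-step β-reduction. -/
def BetaStar : Lam → Lam → Prop := Relation.ReflTransGen Beta

/-- β-equivalence. -/
def BetaEq : Lam → Lam → Prop := Relation.EqvGen Beta

/-- One-step η-reduction. -/
inductive Eta : Lam → Lam → Prop
  | eta (t : Lam) : Eta (lam (app (lift 0 t) (var 0))) t
  | appL {t t' : Lam} (u : Lam) : Eta t t' → Eta (app t u) (app t' u)
  | appR (t : Lam) {u u' : Lam} : Eta u u' → Eta (app t u) (app t u')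
  | lam {t t' : Lam} : Eta t t' → Eta (lam t) (lam t')

/-- βη-equivalence. -/
def BetaEtaEq : Lam → Lam → Prop := Relation.EqvGen (fun t u => Beta t u ∨ Eta t u)

/-- One-step weak head reduction: contracts the weak head redex `(λ t) u`
possibly applied to further arguments. -/
inductive Whr : Lam → Lam → Prop
  | head (t u : Lam) : Whr (app (lam t) u) (subst t 0 u)
  | appL {t t' : Lam} (u : Lam) : Whr t t' → Whr (app t u) (app t' u)

/-- Many-step weak head reduction (`≻_f`). -/
def WhrStar : Lam → Lam → Prop := Relation.ReflTransGen Whr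

/-- A term is normal when it has no β-redex. -/
def Normal (t : Lam) : Prop := ∀ u, ¬ Beta t u

def Normalizable (t : Lam) : Prop := ∃ u, BetaStar t u ∧ Normal u

/-- `(t)v₁…vₘ`. -/
def appList (t : Lam) (l : List Lam) : Lam := l.foldl app t

end Lam

/-- A set of λ-terms is saturated when it is closed under weak-head-expansion. -/
def Saturated (G : Set Lam) : Prop := ∀ t u : Lam, Lam.WhrStar t u → u ∈ G → t ∈ G

/-- A set of λ-terms is β-saturated when it is closed under β-expansion. -/
def BetaSaturated (G : Set Lam) : Prop := ∀ t u : Lam, Lam.BetaStar t u → u ∈ G → t ∈ G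

/-- `G → G' = {u : ∀ t ∈ G, (u)t ∈ G'}`. -/
def arrowSet (G G' : Set Lam) : Set Lam := {u | ∀ t ∈ G, Lam.app u t ∈ G'}

/-- Types of System F (de Bruijn type variables). -/
inductive Ty : Type
  | var : ℕ → Ty
  | arr : Ty → Ty → Ty
  | all : Ty → Ty
deriving DecidableEq

namespace Ty

/-- Shift the free type variables ≥ `d` up by one. -/
def lift (d : ℕ) : Ty → Ty
  | var n => if n < d then var n else var (n + 1)
  | arr A B => arr (lift d A) (lift d B)
  | all A => all (lift (d + 1) A)

/-- Capture-avoiding substitution of the type `C` for the type variable `k`. -/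
def subst : Ty → ℕ → Ty → Ty
  | var n, k, C => if n = k then C else if k < n then var (n - 1) else var n
  | arr A B, k, C => arr (subst A k C) (subst B k C)
  | all A, k, C => all (subst A (k + 1) (lift 0 C))

/-- Free type variables. -/
def fv : Ty → Finset ℕ
  | var n => {n}
  | arr A B => fv A ∪ fv B
  | all A => ((fv A).erase 0).image (· - 1)

end Ty

mutual
  /-- ∀⁺ types: types with positive quantifiers. -/
  inductive PosTy : Ty → Prop
    | var (n : ℕ) : PosTy (Ty.var n)
    | arr {B A : Ty} : NegTy B → PosTy A → PosTy (Ty.arr B A)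
    | all {A : Ty} : PosTy A → 0 ∈ A.fv → PosTy (Ty.all A)
  /-- ∀⁻ types: types with negative quantifiers. -/
  inductive NegTy : Ty → Prop
    | var (n : ℕ) : NegTy (Ty.var n)
    | arr {B A : Ty} : PosTy B → NegTy A → NegTy (Ty.arr B A)
end

/-- Typing contexts: a partial assignment of types to (de Bruijn) term variables. -/
def Ctx : Type := ℕ → Option Ty

def Ctx.empty : Ctx := fun _ => none

def Ctx.cons (B : Ty) (Γ : Ctx) : Ctx := fun n =>
  match n with
  | 0 => some B
  | n + 1 => Γ n

/-- Shift all type variables of a context (used for ∀-introduction: the fresh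
type variable `0` does not occur in the shifted context). -/
def Ctx.liftTy (Γ : Ctx) : Ctx := fun n => (Γ n).map (Ty.lift 0)

/-- Curry-style typing of System F. -/
inductive TyJ : Ctx → Lam → Ty → Prop
  | var {Γ : Ctx} {x : ℕ} {A : Ty} : Γ x = some A → TyJ Γ (Lam.var x) A
  | lam {Γ : Ctx} {B C : Ty} {t : Lam} :
      TyJ (Ctx.cons B Γ) t C → TyJ Γ (Lam.lam t) (Ty.arr B C)
  | app {Γ : Ctx} {B C : Ty} {u v : Lam} :
      TyJ Γ u (Ty.arr B C) → TyJ Γ v B → TyJ Γ (Lam.app u v) C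
  | allI {Γ : Ctx} {A : Ty} {t : Lam} :
      TyJ (Ctx.liftTy Γ) t A → TyJ Γ t (Ty.all A)
  | allE {Γ : Ctx} {A : Ty} {t : Lam} (C : Ty) :
      TyJ Γ t (Ty.all A) → TyJ Γ t (Ty.subst A 0 C)

/-- System F0 : System F where ∀-elimination only instantiates by type variables. -/
inductive TyJ0 : Ctx → Lam → Ty → Prop
  | var {Γ : Ctx} {x : ℕ} {A : Ty} : Γ x = some A → TyJ0 Γ (Lam.var x) A
  | lam {Γ : Ctx} {B C : Ty} {t : Lam} :
      TyJ0 (Ctx.cons B Γ) t C → TyJ0 Γ (Lam.lam t) (Ty.arr B C)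
  | app {Γ : Ctx} {B C : Ty} {u v : Lam} :
      TyJ0 Γ u (Ty.arr B C) → TyJ0 Γ v B → TyJ0 Γ (Lam.app u v) C
  | allI {Γ : Ctx} {A : Ty} {t : Lam} :
      TyJ0 (Ctx.liftTy Γ) t A → TyJ0 Γ t (Ty.all A)
  | allE {Γ : Ctx} {A : Ty} {t : Lam} (Y : ℕ) :
      TyJ0 Γ t (Ty.all A) → TyJ0 Γ t (Ty.subst A 0 (Ty.var Y))

/-- Interpretations: assignments of sets of λ-terms to type variables. -/
def Interp : Type := ℕ → Set Lam

def Interp.cons (G : Set Lam) (I : Interp) : Interp := fun n =>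
  match n with
  | 0 => G
  | n + 1 => I n

/-- Interpretation of types, parameterized by the admissibility class `C` of
sets used to interpret type variables (e.g. `Saturated`). -/
def interpC (C : Set Lam → Prop) : Ty → Interp → Set Lam
  | Ty.var n, I => I n
  | Ty.arr A B, I => arrowSet (interpC C A I) (interpC C B I)
  | Ty.all A, I => ⋂ (G : Set Lam) (_ : C G), interpC C A (Interp.cons G I)

/-- Girard–Krivine interpretation `|A|_I` with saturated sets. -/
def interp : Ty → Interp → Set Lam := interpC Saturated

/-- `|A|`, the intersection of `|A|_I` over all admissible interpretations. -/
def SemC (C : Set Lam → Prop) (A : Ty) : Set Lam :=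
  {t | ∀ I : Interp, (∀ n, C (I n)) → t ∈ interpC C A I}

/-- `|A| = ⋂_I |A|_I` over interpretations into saturated sets. -/
def Sem (A : Ty) : Set Lam := SemC Saturated A

/-- `Bool = ∀X(X→(X→X))`. -/
def BoolTy : Ty := Ty.all (Ty.arr (Ty.var 0) (Ty.arr (Ty.var 0) (Ty.var 0)))

/-! ### Auxiliary development -/

namespace Lam

def upρ (ρ : ℕ → ℕ) : ℕ → ℕ
  | 0 => 0
  | n + 1 => ρ n + 1

def rename (ρ : ℕ → ℕ) : Lam → Lam
  | var n => var (ρ n)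
  | app t u => app (rename ρ t) (rename ρ u)
  | lam t => lam (rename (upρ ρ) t)

def up (σ : ℕ → Lam) : ℕ → Lam
  | 0 => var 0
  | n + 1 => lift 0 (σ n)

def psubst : Lam → (ℕ → Lam) → Lam
  | var n, σ => σ n
  | app t u, σ => app (psubst t σ) (psubst u σ)
  | lam t, σ => lam (psubst t (up σ))

theorem rename_ext : ∀ (t : Lam) {ρ τ : ℕ → ℕ}, (∀ n, ρ n = τ n) →
    rename ρ t = rename τ t
  | var n, _, _, h => by simp [rename, h n]
  | app t u, _, _, h => by simp [rename, rename_ext t h, rename_ext u h]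
  | lam t, _, _, h => by
    simp only [rename, lam.injEq]
    exact rename_ext t (fun n => by cases n <;> simp [upρ, h])

theorem psubst_ext : ∀ (t : Lam) {σ τ : ℕ → Lam}, (∀ n, σ n = τ n) →
    psubst t σ = psubst t τ
  | var n, _, _, h => h n
  | app t u, _, _, h => by simp [psubst, psubst_ext t h, psubst_ext u h]
  | lam t, _, _, h => by
    simp only [psubst, lam.injEq]
    exact psubst_ext t (fun n => by cases n <;> simp [up, h])

theorem lift_eq_rename : ∀ (t : Lam) (d : ℕ),
    lift d t = rename (fun n => if n < d then n else n + 1) t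
  | var n, d => by simp only [lift, rename]; split <;> simp
  | app t u, d => by simp [lift, rename, lift_eq_rename t d, lift_eq_rename u d]
  | lam t, d => by
    simp only [lift, rename, lam.injEq, lift_eq_rename t (d+1)]
    exact rename_ext t (fun n => by cases n <;> simp [upρ] <;> split <;> omega)

theorem rename_rename : ∀ (t : Lam) (ρ₁ ρ₂ : ℕ → ℕ),
    rename ρ₂ (rename ρ₁ t) = rename (fun n => ρ₂ (ρ₁ n)) t
  | var n, _, _ => rfl
  | app t u, ρ₁, ρ₂ => by simp [rename, rename_rename t, rename_rename u]
  | lam t, ρ₁, ρ₂ => by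
    simp only [rename, lam.injEq, rename_rename t]
    exact rename_ext t (fun n => by cases n <;> simp [upρ])

theorem psubst_rename : ∀ (t : Lam) (ρ : ℕ → ℕ) (σ : ℕ → Lam),
    psubst (rename ρ t) σ = psubst t (fun n => σ (ρ n))
  | var n, _, _ => rfl
  | app t u, ρ, σ => by simp [rename, psubst, psubst_rename t, psubst_rename u]
  | lam t, ρ, σ => by
    simp only [rename, psubst, lam.injEq, psubst_rename t]
    exact psubst_ext t (fun n => by cases n <;> simp [upρ, up])

theorem rename_psubst : ∀ (t : Lam) (σ : ℕ → Lam) (ρ : ℕ → ℕ),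
    rename ρ (psubst t σ) = psubst t (fun n => rename ρ (σ n))
  | var n, _, _ => rfl
  | app t u, σ, ρ => by simp [psubst, rename, rename_psubst t, rename_psubst u]
  | lam t, σ, ρ => by
    simp only [psubst, rename, lam.injEq, rename_psubst t]
    refine psubst_ext t (fun n => ?_)
    cases n with
    | zero => simp [up, upρ, rename]
    | succ n =>
      simp only [up, lift_eq_rename, rename_rename]
      exact rename_ext _ (fun m => by simp [upρ])

theorem psubst_psubst : ∀ (t : Lam) (σ τ : ℕ → Lam),
    psubst (psubst t σ) τ = psubst t (fun n => psubst (σ n) τ)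
  | var n, _, _ => rfl
  | app t u, σ, τ => by simp [psubst, psubst_psubst t, psubst_psubst u]
  | lam t, σ, τ => by
    simp only [psubst, lam.injEq, psubst_psubst t]
    refine psubst_ext t (fun n => ?_)
    cases n with
    | zero => rfl
    | succ n =>
      simp only [up, lift_eq_rename, psubst_rename, rename_psubst]
      exact psubst_ext _ (fun m => by simp)

theorem psubst_id : ∀ t : Lam, psubst t var = t
  | var n => rfl
  | app t u => by simp [psubst, psubst_id t, psubst_id u]
  | lam t => by
    simp only [psubst, lam.injEq]
    rw [psubst_ext t (τ := var) (fun n => by cases n <;> simp [up, lift]), psubst_id t]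

/-- The single-substitution as a parallel substitution. -/
def sσ (k : ℕ) (u : Lam) : ℕ → Lam := fun n =>
  if n = k then u else if k < n then var (n - 1) else var n

theorem subst_eq_psubst : ∀ (t : Lam) (k : ℕ) (u : Lam),
    subst t k u = psubst t (sσ k u)
  | var n, k, u => rfl
  | app t s, k, u => by simp [subst, psubst, subst_eq_psubst t, subst_eq_psubst s]
  | lam t, k, u => by
    simp only [subst, psubst, lam.injEq, subst_eq_psubst t]
    refine psubst_ext t (fun n => ?_)
    cases n with
    | zero => simp [sσ, up]
    | succ n =>
      simp only [sσ, up]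
      rcases Nat.lt_trichotomy n k with h | rfl | h
      · rw [if_neg (by omega), if_neg (by omega), if_neg (by omega), if_neg (by omega)]
        simp [lift]
      · simp
      · rw [if_neg (by omega), if_pos (by omega), if_neg (by omega), if_pos h]
        simp only [lift, Nat.succ_sub_one]
        rw [if_neg (by omega)]
        congr 1
        omega

def scons (u : Lam) (σ : ℕ → Lam) : ℕ → Lam
  | 0 => u
  | n + 1 => σ n

theorem subst_psubst_up (t : Lam) (σ : ℕ → Lam) (u : Lam) :
    subst (psubst t (up σ)) 0 u = psubst t (scons u σ) := by
  rw [subst_eq_psubst, psubst_psubst]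
  refine psubst_ext t (fun n => ?_)
  cases n with
  | zero => simp [up, psubst, sσ, scons]
  | succ n =>
    simp only [up, scons, lift_eq_rename, psubst_rename]
    have : (fun m => sσ 0 u (if m < 0 then m else m + 1)) = var := by
      funext m; simp [sσ]
    rw [this, psubst_id]

theorem whr_beta {t u : Lam} (h : Whr t u) : Beta t u := by
  induction h with
  | head t u => exact Beta.beta t u
  | appL u _ ih => exact Beta.appL u ih

theorem whrStar_appL {t t' : Lam} (v : Lam) (h : WhrStar t t') :
    WhrStar (app t v) (app t' v) :=
  h.lift (fun x => app x v) (fun _ _ h => Whr.appL v h)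

/-- Structurally normal terms. -/
def NR : Lam → Prop
  | var _ => True
  | app u v => (∀ s, u ≠ lam s) ∧ NR u ∧ NR v
  | lam t => NR t

theorem normal_iff_NR : ∀ t : Lam, Normal t ↔ NR t
  | var n => ⟨fun _ => trivial, fun _ u h => by cases h⟩
  | app u v => by
    constructor
    · intro h
      refine ⟨fun s hs => ?_, (normal_iff_NR u).1 (fun w hw => h _ (Beta.appL v hw)),
        (normal_iff_NR v).1 (fun w hw => h _ (Beta.appR u hw))⟩
      subst hs; exact h _ (Beta.beta s v)
    · rintro ⟨h1, h2, h3⟩ w hw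
      cases hw with
      | beta t u => exact h1 _ rfl
      | appL _ hb => exact (normal_iff_NR u).2 h2 _ hb
      | appR _ hb => exact (normal_iff_NR v).2 h3 _ hb
  | lam t => by
    constructor
    · intro h
      exact (normal_iff_NR t).1 (fun w hw => h _ (Beta.lam hw))
    · intro h w hw
      cases hw with
      | lam hb => exact (normal_iff_NR t).2 h _ hb

theorem subst_var_eq_lam {t : Lam} {k m : ℕ} {s : Lam}
    (h : subst t k (var m) = lam s) : ∃ s', t = lam s' := by
  cases t with
  | var n => simp only [subst] at h; split_ifs at h <;> cases h
  | app a b => simp [subst] at h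
  | lam a => exact ⟨a, rfl⟩

theorem NR_subst_var : ∀ (t : Lam) (k m : ℕ), NR t → NR (subst t k (var m))
  | var n, k, m, _ => by
    simp only [subst, NR]; split_ifs <;> trivial
  | app u v, k, m, h => by
    refine ⟨fun s hs => ?_, NR_subst_var u k m h.2.1, NR_subst_var v k m h.2.2⟩
    obtain ⟨s', rfl⟩ := subst_var_eq_lam hs
    exact h.1 s' rfl
  | lam t, k, m, h => by
    show NR (lam (subst t (k+1) (lift 0 (var m))))
    have : lift 0 (var m) = var (m + 1) := by simp [lift]
    rw [this]
    exact NR_subst_var t (k+1) (m+1) h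

theorem normal_subst_var {t : Lam} (k m : ℕ) (h : Normal t) :
    Normal (subst t k (var m)) :=
  (normal_iff_NR _).2 (NR_subst_var t k m ((normal_iff_NR t).1 h))

theorem normal_whrStar_eq {t u : Lam} (hn : Normal t) (h : WhrStar t u) : t = u := by
  rcases Relation.ReflTransGen.cases_head h with rfl | ⟨w, hw, _⟩
  · rfl
  · exact absurd (whr_beta hw) (hn w)

end Lam

/-! ### Semantics lemmas -/

def insertI (d : ℕ) (G : Set Lam) (I : Interp) : Interp := fun n =>
  if n < d then I n else if n = d then G else I (n - 1)

theorem insertI_zero (G : Set Lam) (I : Interp) :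
    insertI 0 G I = Interp.cons G I := by
  funext n
  cases n with
  | zero => simp [insertI, Interp.cons]
  | succ n => simp [insertI, Interp.cons]

theorem cons_insertI (H G : Set Lam) (d : ℕ) (I : Interp) :
    Interp.cons H (insertI d G I) = insertI (d + 1) G (Interp.cons H I) := by
  funext n
  cases n with
  | zero => simp [insertI, Interp.cons]
  | succ n =>
    show insertI d G I n = _
    simp only [insertI, Interp.cons]
    rcases Nat.lt_trichotomy n d with h | rfl | h
    · rw [if_pos h, if_pos (by omega)]
    · rw [if_neg (by omega), if_pos rfl, if_neg (by omega), if_pos rfl]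
    · rw [if_neg (by omega), if_neg (by omega), if_neg (by omega), if_neg (by omega)]
      obtain ⟨m, rfl⟩ : ∃ m, n = m + 1 := ⟨n - 1, by omega⟩
      show I m = Interp.cons H I (m + 1)
      rfl

theorem interpC_lift (C : Set Lam → Prop) :
    ∀ (A : Ty) (d : ℕ) (G : Set Lam) (I : Interp),
    interpC C (Ty.lift d A) (insertI d G I) = interpC C A I
  | Ty.var n, d, G, I => by
    simp only [Ty.lift, interpC]
    split
    · rename_i h
      simp [interpC, insertI, h]
    · rename_i h
      simp only [interpC, insertI]
      rw [if_neg (by omega), if_neg (by omega)]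
      simp
  | Ty.arr A B, d, G, I => by
    simp [Ty.lift, interpC, interpC_lift C A d G I, interpC_lift C B d G I]
  | Ty.all A, d, G, I => by
    simp only [Ty.lift, interpC]
    refine Set.iInter_congr (fun H => Set.iInter_congr (fun _ => ?_))
    rw [cons_insertI, interpC_lift C A (d+1) G (Interp.cons H I)]

theorem interpC_subst (C : Set Lam → Prop) :
    ∀ (A : Ty) (k : ℕ) (B : Ty) (I : Interp),
    interpC C (Ty.subst A k B) I = interpC C A (insertI k (interpC C B I) I)
  | Ty.var n, k, B, I => by
    simp only [Ty.subst]
    rcases Nat.lt_trichotomy n k with h | rfl | h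
    · rw [if_neg (by omega), if_neg (by omega)]
      simp [interpC, insertI, h]
    · rw [if_pos rfl]
      simp [interpC, insertI]
    · rw [if_neg (by omega), if_pos h]
      simp only [interpC, insertI]
      rw [if_neg (by omega), if_neg (by omega)]
  | Ty.arr A B', k, B, I => by
    simp [Ty.subst, interpC, interpC_subst C A k B I, interpC_subst C B' k B I]
  | Ty.all A, k, B, I => by
    simp only [Ty.subst, interpC]
    refine Set.iInter_congr (fun H => Set.iInter_congr (fun _ => ?_))
    rw [interpC_subst C A (k+1) (Ty.lift 0 B) (Interp.cons H I)]
    rw [← insertI_zero H I, interpC_lift C B 0 H I, insertI_zero H I, ← cons_insertI]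

theorem saturated_interp : ∀ (A : Ty) (I : Interp), (∀ n, Saturated (I n)) →
    Saturated (interpC Saturated A I)
  | Ty.var n, I, h => h n
  | Ty.arr A B, I, h => by
    intro t u htu hu v hv
    exact saturated_interp B I h _ _ (Lam.whrStar_appL v htu) (hu v hv)
  | Ty.all A, I, h => by
    intro t u htu hu
    simp only [interpC, Set.mem_iInter] at hu ⊢
    intro G hG
    refine saturated_interp A (Interp.cons G I) ?_ _ _ htu (hu G hG)
    intro n; cases n with
    | zero => exact hG
    | succ n => exact h n

theorem soundness {Γ : Ctx} {t : Lam} {A : Ty} (h : TyJ Γ t A) :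
    ∀ (I : Interp), (∀ n, Saturated (I n)) → ∀ (σ : ℕ → Lam),
      (∀ x B, Γ x = some B → σ x ∈ interpC Saturated B I) →
      Lam.psubst t σ ∈ interpC Saturated A I := by
  induction h with
  | var h =>
    intro I hI σ hσ
    exact hσ _ _ h
  | lam h ih =>
    intro I hI σ hσ
    intro u hu
    refine saturated_interp _ I hI _ _
      (Relation.ReflTransGen.single (Lam.Whr.head _ u)) ?_
    rw [Lam.subst_psubst_up]
    refine ih I hI _ (fun x B' hx => ?_)
    cases x with
    | zero =>
      injection hx with hx
      subst hx
      exact hu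
    | succ x => exact hσ x B' hx
  | app h1 h2 ih1 ih2 =>
    intro I hI σ hσ
    exact ih1 I hI σ hσ _ (ih2 I hI σ hσ)
  | allI h ih =>
    intro I hI σ hσ
    simp only [interpC, Set.mem_iInter]
    intro G hG
    refine ih (Interp.cons G I) ?_ σ (fun x B hx => ?_)
    · intro n; cases n with
      | zero => exact hG
      | succ n => exact hI n
    · -- hx : Ctx.liftTy Γ x = some B
      simp only [Ctx.liftTy, Option.map_eq_some_iff] at hx
      obtain ⟨B0, hB0, rfl⟩ := hx
      rw [← insertI_zero, interpC_lift]
      exact hσ x B0 hB0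
  | allE C h ih =>
    intro I hI σ hσ
    have ht := ih I hI σ hσ
    simp only [interpC, Set.mem_iInter] at ht
    rw [interpC_subst, insertI_zero]
    exact ht _ (saturated_interp C I hI)

/-! ### The key syntactic analysis -/

open Lam in
theorem whr_app_inv {a b w : Lam} (h : Lam.Whr (Lam.app a b) w) :
    (∃ s, a = Lam.lam s ∧ w = Lam.subst s 0 b) ∨
    (∃ a', Lam.Whr a a' ∧ w = Lam.app a' b) := by
  cases h with
  | head t u => exact Or.inl ⟨t, rfl, rfl⟩
  | appL _ hs => exact Or.inr ⟨_, hs, rfl⟩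

open Lam in
theorem key_analysis {t : Lam} (hn : t.Normal) {i : ℕ}
    (h : WhrStar (app (app t (var 0)) (var 1)) (var i)) :
    ∃ k, t = lam (lam (var k)) ∧
      Lam.subst (Lam.subst (var k) 1 (var 1)) 0 (var 1) = var i := by
  rcases Relation.ReflTransGen.cases_head h with heq | ⟨w, hw, hrest⟩
  · cases heq
  rcases whr_app_inv hw with ⟨s, hs, rfl⟩ | ⟨a', ha', rfl⟩
  · cases hs
  rcases whr_app_inv ha' with ⟨s, rfl, rfl⟩ | ⟨a'', ha'', _⟩
  swap
  · exact absurd (whr_beta ha'') (hn _)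
  -- t = lam s
  have hsn : Normal s := fun w hw => hn _ (Beta.lam hw)
  have hs_norm : Normal (Lam.subst s 0 (var 0)) := normal_subst_var 0 0 hsn
  rcases Relation.ReflTransGen.cases_head hrest with heq | ⟨w2, hw2, hrest2⟩
  · cases heq
  rcases whr_app_inv hw2 with ⟨s2, hs2, rfl⟩ | ⟨b', hb', _⟩
  swap
  · exact absurd (whr_beta hb') (hs_norm _)
  obtain ⟨s1, rfl⟩ := subst_var_eq_lam hs2
  have hs1n : Normal s1 := fun w hw => hsn _ (Beta.lam hw)
  have hcomp : Lam.subst (lam s1) 0 (var 0) = lam (Lam.subst s1 1 (var 1)) := by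
    simp [Lam.subst, Lam.lift]
  rw [hcomp] at hs2
  injection hs2 with hs2
  subst hs2
  have hw2n : Normal (Lam.subst (Lam.subst s1 1 (var 1)) 0 (var 1)) :=
    normal_subst_var 0 1 (normal_subst_var 1 1 hs1n)
  have hfin := normal_whrStar_eq hw2n hrest2
  cases s1 with
  | var k => exact ⟨k, rfl, hfin⟩
  | app a b => simp [Lam.subst] at hfin
  | lam a => simp [Lam.subst] at hfin
theorem forward_main {t : Lam} (hfv : t.fv = ∅) (hn : t.Normal)
    (ht : TyJ Ctx.empty t BoolTy) :
    t = Lam.lam (Lam.lam (Lam.var 1)) ∨ t = Lam.lam (Lam.lam (Lam.var 0)) := by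
  classical
  set G : Set Lam := {u | Lam.WhrStar u (Lam.var 0) ∨ Lam.WhrStar u (Lam.var 1)} with hGdef
  have hGsat : Saturated G := by
    rintro a b hab (hb | hb)
    · exact Or.inl (hab.trans hb)
    · exact Or.inr (hab.trans hb)
  have hs := soundness ht (fun _ => G) (fun _ => hGsat) Lam.var
      (fun x B h => by simp [Ctx.empty] at h)
  rw [Lam.psubst_id] at hs
  have h0 : Lam.var 0 ∈ G := Or.inl Relation.ReflTransGen.refl
  have h1 : Lam.var 1 ∈ G := Or.inr Relation.ReflTransGen.refl
  simp only [BoolTy, interpC, Interp.cons, Set.mem_iInter] at hs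
  have h2 : Lam.app (Lam.app t (Lam.var 0)) (Lam.var 1) ∈ G :=
    hs G hGsat _ h0 _ h1
  have esub : ∀ m : ℕ,
      Lam.subst (Lam.subst (Lam.var (m+2)) 1 (Lam.var 1)) 0 (Lam.var 1)
        = Lam.var m := by
    intro m
    have e1 : Lam.subst (Lam.var (m+2)) 1 (Lam.var 1) = Lam.var (m+1) := by
      simp only [Lam.subst]
      rw [if_neg (by omega), if_pos (by omega)]
      all_goals (congr 1 <;> omega)
    rw [e1]
    simp only [Lam.subst]
    rw [if_neg (by omega), if_pos (by omega)]
    all_goals (congr 1 <;> omega)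
  rcases h2 with h | h
  · obtain ⟨k, rfl, hk⟩ := key_analysis hn h
    match k with
    | 0 => simp [Lam.subst] at hk
    | 1 => exact Or.inl rfl
    | (m+2) =>
      exfalso
      rw [esub m] at hk
      injection hk with hk
      subst hk
      exact absurd hfv (by decide)
  · obtain ⟨k, rfl, hk⟩ := key_analysis hn h
    match k with
    | 0 => exact Or.inr rfl
    | 1 => simp [Lam.subst] at hk
    | (m+2) =>
      exfalso
      rw [esub m] at hk
      injection hk with hk
      subst hk
      exact absurd hfv (by decide)

theorem tyTrue : TyJ Ctx.empty (Lam.lam (Lam.lam (Lam.var 1))) BoolTy := by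
  refine TyJ.allI ?_
  have hctx : Ctx.liftTy Ctx.empty = Ctx.empty := rfl
  rw [hctx]
  exact TyJ.lam (TyJ.lam (TyJ.var rfl))

theorem tyFalse : TyJ Ctx.empty (Lam.lam (Lam.lam (Lam.var 0))) BoolTy := by
  refine TyJ.allI ?_
  have hctx : Ctx.liftTy Ctx.empty = Ctx.empty := rfl
  rw [hctx]
  exact TyJ.lam (TyJ.lam (TyJ.var rfl))
/-- the identity is not of type `Bool`; more precisely the closed
normal terms of type `Bool` are exactly `λxλy.x` and `λxλy.y`. -/
theorem bool_representation :
    ¬ TyJ Ctx.empty (Lam.lam (Lam.var 0)) BoolTy ∧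
    (∀ t : Lam, t.fv = ∅ → t.Normal →
      (TyJ Ctx.empty t BoolTy ↔
        t = Lam.lam (Lam.lam (Lam.var 1)) ∨ t = Lam.lam (Lam.lam (Lam.var 0)))) := by
  have part2 : ∀ t : Lam, t.fv = ∅ → t.Normal →
      (TyJ Ctx.empty t BoolTy ↔
        t = Lam.lam (Lam.lam (Lam.var 1)) ∨ t = Lam.lam (Lam.lam (Lam.var 0))) := by
    intro t hfv hn
    constructor
    · exact forward_main hfv hn
    · rintro (rfl | rfl)
      · exact tyTrue
      · exact tyFalse
  refine ⟨?_, part2⟩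
  intro h
  have hno : (Lam.lam (Lam.var 0)).Normal := by
    intro u hu
    cases hu with
    | lam hb => cases hb
  have := (part2 (Lam.lam (Lam.var 0)) (by decide) hno).1 h
  revert this
  decide
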